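/- Let C be a binary linear code of length n whose extended code C_ex is transitive invariant. For odd w, L_w(C) = ((w+1)/(n+1)) · L_{w+1}(C_ex). -/

import Mathlib

open Finset

/-- Support of a binary vector: the set of nonzero coordinates. -/
def supp {n : ℕ} (v : Fin n → ZMod 2) : Finset (Fin n) :=
  Finset.univ.filter fun i => v i ≠ 0

/-- Hamming weight. -/
def wt {n : ℕ} (v : Fin n → ZMod 2) : ℕ := (supp v).card

/-- A nonzero codeword of `D` is a zero neighbor (minimal codeword) if no nonzero
codeword of `D` has support strictly contained in its support. -/
def IsZeroNeighbor {n : ℕ} (D : Set (Fin n → ZMod 2)) (v : Fin n → ZMod 2) : Prop :=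
  v ∈ D ∧ v ≠ 0 ∧ ∀ v' ∈ D, v' ≠ 0 → ¬ supp v' ⊂ supp v

/-- `v` is decomposable in `D` if it is the sum of two nonzero codewords of `D`
with disjoint supports. -/
def Decomposable {n : ℕ} (D : Set (Fin n → ZMod 2)) (v : Fin n → ZMod 2) : Prop :=
  ∃ v1 v2, v1 ∈ D ∧ v2 ∈ D ∧ v1 ≠ 0 ∧ v2 ≠ 0 ∧
    Disjoint (supp v1) (supp v2) ∧ v = v1 + v2

/-- Extension of a vector by its overall parity bit. -/
def extVec {n : ℕ} (v : Fin n → ZMod 2) : Fin (n + 1) → ZMod 2 :=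
  Fin.snoc v (∑ i, v i)

/-- The extended code. -/
def extCode {n : ℕ} (C : Submodule (ZMod 2) (Fin n → ZMod 2)) :
    Set (Fin (n + 1) → ZMod 2) :=
  extVec '' (C : Set (Fin n → ZMod 2))

/-- An even-weight codeword is only-odd-decomposable if it is decomposable and in every
decomposition into nonzero disjoint-support codewords both parts have odd weight. -/
def OnlyOddDecomposable {n : ℕ} (C : Submodule (ZMod 2) (Fin n → ZMod 2))
    (v : Fin n → ZMod 2) : Prop :=
  Even (wt v) ∧ Decomposable (C : Set (Fin n → ZMod 2)) v ∧
    ∀ v1 v2, v1 ∈ C → v2 ∈ C → v1 ≠ 0 → v2 ≠ 0 →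
      Disjoint (supp v1) (supp v2) → v = v1 + v2 → Odd (wt v1) ∧ Odd (wt v2)

/-- `L_w(D)`: the number of zero neighbors of weight `w` in `D`. -/
noncomputable def Lw {n : ℕ} (D : Set (Fin n → ZMod 2)) (w : ℕ) : ℕ :=
  {v : Fin n → ZMod 2 | IsZeroNeighbor D v ∧ wt v = w}.ncard

/-- `N_w(C)`: the number of only-odd-decomposable codewords of weight `w` in `C`. -/
noncomputable def Nw {n : ℕ} (C : Submodule (ZMod 2) (Fin n → ZMod 2)) (w : ℕ) : ℕ :=
  {v : Fin n → ZMod 2 | v ∈ C ∧ OnlyOddDecomposable C v ∧ wt v = w}.ncard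

/-- Action of a coordinate permutation on a vector. -/
def permVec {n : ℕ} (π : Equiv.Perm (Fin n)) (v : Fin n → ZMod 2) : Fin n → ZMod 2 :=
  v ∘ π.symm

/-- `π` is an automorphism of the code `D`. -/
def IsAut {n : ℕ} (D : Set (Fin n → ZMod 2)) (π : Equiv.Perm (Fin n)) : Prop :=
  permVec π '' D = D

/-- The even weight subcode of `C`, as a set. -/
def evenSub {n : ℕ} (C : Submodule (ZMod 2) (Fin n → ZMod 2)) :
    Set (Fin n → ZMod 2) :=
  {v : Fin n → ZMod 2 | v ∈ C ∧ Even (wt v)}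

/-!
Appending the parity bit identifies the odd-weight zero neighbors of `C` of weight `w` with the
zero neighbors of `C_ex` of weight `w + 1` whose last coordinate is nonzero. Since the
automorphism group of `C_ex` is transitive, every coordinate lies in the support of equally many
zero neighbors of weight `w + 1`, so counting the incidences between coordinates and these zero
neighbors in two ways gives `(n + 1) L_w(C) = (w + 1) L_{w+1}(C_ex)`.
-/

variable {n : ℕ}

section Support

lemma mem_supp {v : Fin n → ZMod 2} {i : Fin n} : i ∈ supp v ↔ v i ≠ 0 := by
  simp [supp]

lemma supp_injective : Function.Injective (supp (n := n)) := by
  intro v v' h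
  funext i
  have key : ∀ a b : ZMod 2, (a ≠ 0 ↔ b ≠ 0) → a = b := by decide
  exact key _ _ (by rw [← mem_supp, ← mem_supp, h])

lemma sum_eq_wt (v : Fin n → ZMod 2) : ∑ i, v i = (wt v : ZMod 2) := by
  have key : ∀ a : ZMod 2, a = if a ≠ 0 then 1 else 0 := by decide
  rw [wt, supp, natCast_card_filter]
  exact sum_congr rfl fun i _ => key (v i)

end Support

section ParityExtension

@[simp]
lemma extVec_castSucc (v : Fin n → ZMod 2) (i : Fin n) : extVec v i.castSucc = v i := by
  simp [extVec]

lemma extVec_last_ne_zero_iff (v : Fin n → ZMod 2) :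
    extVec v (Fin.last n) ≠ 0 ↔ Odd (wt v) := by
  simp only [extVec, Fin.snoc_last, sum_eq_wt, ZMod.natCast_ne_zero_iff_odd]

lemma extVec_injective : Function.Injective (extVec (n := n)) := by
  intro v v' h
  funext i
  simpa using congrFun h i.castSucc

lemma extVec_eq_zero_iff {v : Fin n → ZMod 2} : extVec v = 0 ↔ v = 0 := by
  have h0 : extVec (0 : Fin n → ZMod 2) = 0 := by
    funext j
    refine Fin.lastCases ?_ (fun i => ?_) j <;> simp [extVec]
  rw [← h0, extVec_injective.eq_iff]

lemma castSucc_mem_supp_extVec {v : Fin n → ZMod 2} {i : Fin n} :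
    i.castSucc ∈ supp (extVec v) ↔ i ∈ supp v := by
  rw [mem_supp, mem_supp, extVec_castSucc]

lemma supp_extVec_of_odd {v : Fin n → ZMod 2} (hv : Odd (wt v)) :
    supp (extVec v) = cons (Fin.last n) ((supp v).map Fin.castSuccEmb) (by simp) := by
  ext j
  rcases Fin.eq_castSucc_or_eq_last j with ⟨i, rfl⟩ | rfl
  · simp [castSucc_mem_supp_extVec, Fin.castSucc_ne_last]
  · simpa [mem_supp] using (extVec_last_ne_zero_iff v).2 hv

lemma wt_extVec_of_odd {v : Fin n → ZMod 2} (hv : Odd (wt v)) : wt (extVec v) = wt v + 1 := by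
  rw [wt, supp_extVec_of_odd hv, card_cons, card_map, wt]

lemma supp_extVec_subset_iff {v v' : Fin n → ZMod 2} (hv : Odd (wt v)) :
    supp (extVec v') ⊆ supp (extVec v) ↔ supp v' ⊆ supp v := by
  rw [supp_extVec_of_odd hv]
  constructor
  · intro h i hi
    simpa [Fin.castSucc_ne_last] using h (castSucc_mem_supp_extVec.2 hi)
  · intro h j hj
    rcases Fin.eq_castSucc_or_eq_last j with ⟨i, rfl⟩ | rfl
    · simpa using h (castSucc_mem_supp_extVec.1 hj)
    · exact mem_cons_self _ _

lemma supp_extVec_ssubset_iff {v v' : Fin n → ZMod 2} (hv : Odd (wt v)) :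
    supp (extVec v') ⊂ supp (extVec v) ↔ supp v' ⊂ supp v := by
  simp only [ssubset_iff_subset_ne, supp_extVec_subset_iff hv, ne_eq,
    supp_injective.eq_iff, extVec_injective.eq_iff]

lemma isZeroNeighbor_image_extVec_iff {D : Set (Fin n → ZMod 2)} {v : Fin n → ZMod 2}
    (hv : Odd (wt v)) : IsZeroNeighbor (extVec '' D) (extVec v) ↔ IsZeroNeighbor D v := by
  simp only [IsZeroNeighbor, extVec_injective.mem_set_image, Set.forall_mem_image, ne_eq,
    extVec_eq_zero_iff, supp_extVec_ssubset_iff hv]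

end ParityExtension

section Automorphisms

@[simp]
lemma permVec_apply (π : Equiv.Perm (Fin n)) (v : Fin n → ZMod 2) (i : Fin n) :
    permVec π v (π i) = v i := by
  simp [permVec]

lemma permVec_injective (π : Equiv.Perm (Fin n)) : Function.Injective (permVec π) :=
  fun v v' h => funext fun i => by simpa using congrFun h (π i)

lemma permVec_symm_permVec (π : Equiv.Perm (Fin n)) (v : Fin n → ZMod 2) :
    permVec π.symm (permVec π v) = v := by
  funext i
  simp [permVec]

lemma permVec_permVec_symm (π : Equiv.Perm (Fin n)) (v : Fin n → ZMod 2) :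
    permVec π (permVec π.symm v) = v := by
  funext i
  simp [permVec]

lemma permVec_eq_zero_iff {π : Equiv.Perm (Fin n)} {v : Fin n → ZMod 2} :
    permVec π v = 0 ↔ v = 0 :=
  ⟨fun h => permVec_injective π (by rw [h]; rfl), fun h => by subst h; rfl⟩

lemma supp_permVec (π : Equiv.Perm (Fin n)) (v : Fin n → ZMod 2) :
    supp (permVec π v) = (supp v).map π.toEmbedding := by
  ext j
  rw [mem_supp, mem_map_equiv, mem_supp]
  rfl

lemma wt_permVec (π : Equiv.Perm (Fin n)) (v : Fin n → ZMod 2) : wt (permVec π v) = wt v := by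
  rw [wt, wt, supp_permVec, card_map]

namespace IsAut

variable {D : Set (Fin n → ZMod 2)} {π : Equiv.Perm (Fin n)}

lemma permVec_mem_iff (h : IsAut D π) {v : Fin n → ZMod 2} : permVec π v ∈ D ↔ v ∈ D := by
  have hv := (permVec_injective π).mem_set_image (s := D) (a := v)
  rwa [h] at hv

lemma forall_mem_iff (h : IsAut D π) {p : (Fin n → ZMod 2) → Prop} :
    (∀ v ∈ D, p v) ↔ ∀ v ∈ D, p (permVec π v) := by
  conv_lhs => rw [← h]
  exact Set.forall_mem_image

lemma isZeroNeighbor_permVec_iff (h : IsAut D π) {v : Fin n → ZMod 2} :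
    IsZeroNeighbor D (permVec π v) ↔ IsZeroNeighbor D v := by
  rw [IsZeroNeighbor, IsZeroNeighbor, h.permVec_mem_iff, h.forall_mem_iff]
  simp only [ne_eq, permVec_eq_zero_iff, supp_permVec, map_ssubset_map]

end IsAut

end Automorphisms

section DoubleCounting

lemma sum_card_filter_apply_ne_zero (s : Finset (Fin n → ZMod 2)) :
    ∑ i, #{u ∈ s | u i ≠ 0} = ∑ u ∈ s, wt u :=
  sum_card_bipartiteAbove_eq_sum_card_bipartiteBelow (s := univ) (t := s)
    (r := fun (i : Fin n) (u : Fin n → ZMod 2) => u i ≠ 0)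

lemma card_filter_apply_ne_zero_eq_of_perm {s : Finset (Fin n → ZMod 2)}
    {π : Equiv.Perm (Fin n)} (hs : ∀ u, permVec π u ∈ s ↔ u ∈ s) (i : Fin n) :
    #{u ∈ s | u i ≠ 0} = #{u ∈ s | u (π i) ≠ 0} := by
  have hs' : ∀ u, permVec π.symm u ∈ s ↔ u ∈ s := fun u => by
    rw [← hs, permVec_permVec_symm]
  refine card_nbij' (permVec π) (permVec π.symm) ?_ ?_ (fun u _ => permVec_symm_permVec π u)
    (fun u _ => permVec_permVec_symm π u)
  · intro u hu
    rw [mem_coe, mem_filter] at hu ⊢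
    exact ⟨(hs u).2 hu.1, by simpa using hu.2⟩
  · intro u hu
    rw [mem_coe, mem_filter] at hu ⊢
    exact ⟨(hs' u).2 hu.1, by simpa [permVec] using hu.2⟩

lemma card_mul_card_filter_apply_ne_zero {s : Finset (Fin n → ZMod 2)} {k : ℕ}
    (hwt : ∀ u ∈ s, wt u = k)
    (htrans : ∀ i j, ∃ π : Equiv.Perm (Fin n), (∀ u, permVec π u ∈ s ↔ u ∈ s) ∧ π i = j)
    (j : Fin n) : n * #{u ∈ s | u j ≠ 0} = k * #s := by
  have hconst : ∀ i, #{u ∈ s | u i ≠ 0} = #{u ∈ s | u j ≠ 0} := fun i => by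
    obtain ⟨π, hπ, rfl⟩ := htrans i j
    exact card_filter_apply_ne_zero_eq_of_perm hπ i
  calc n * #{u ∈ s | u j ≠ 0} = ∑ i, #{u ∈ s | u i ≠ 0} := by
        simp [hconst]
    _ = ∑ u ∈ s, wt u := sum_card_filter_apply_ne_zero s
    _ = k * #s := by rw [sum_congr rfl hwt, sum_const, smul_eq_mul, mul_comm]

end DoubleCounting

section ZeroNeighbors

open Classical in
noncomputable def zeroNeighbors (D : Set (Fin n → ZMod 2)) (k : ℕ) : Finset (Fin n → ZMod 2) :=
  {v | IsZeroNeighbor D v ∧ wt v = k}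

lemma mem_zeroNeighbors {D : Set (Fin n → ZMod 2)} {k : ℕ} {v : Fin n → ZMod 2} :
    v ∈ zeroNeighbors D k ↔ IsZeroNeighbor D v ∧ wt v = k := by
  simp [zeroNeighbors]

lemma Lw_eq_card_zeroNeighbors (D : Set (Fin n → ZMod 2)) (k : ℕ) :
    Lw D k = #(zeroNeighbors D k) := by
  rw [Lw, ← Set.ncard_coe_finset]
  congr 1
  ext v
  simp [mem_zeroNeighbors]

lemma mul_card_zeroNeighbors_filter_apply_ne_zero {D : Set (Fin n → ZMod 2)}
    (htrans : ∀ i j, ∃ π : Equiv.Perm (Fin n), IsAut D π ∧ π i = j) (k : ℕ) (j : Fin n) :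
    n * #{u ∈ zeroNeighbors D k | u j ≠ 0} = k * Lw D k := by
  rw [Lw_eq_card_zeroNeighbors]
  refine card_mul_card_filter_apply_ne_zero (fun u hu => (mem_zeroNeighbors.1 hu).2)
    (fun i j => ?_) j
  obtain ⟨π, hπ, hij⟩ := htrans i j
  exact ⟨π, fun u => by simp [mem_zeroNeighbors, hπ.isZeroNeighbor_permVec_iff, wt_permVec], hij⟩

lemma Lw_eq_card_zeroNeighbors_image_extVec {D : Set (Fin n → ZMod 2)} {w : ℕ} (hw : Odd w) :
    Lw D w = #{u ∈ zeroNeighbors (extVec '' D) (w + 1) | u (Fin.last n) ≠ 0} := by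
  rw [Lw, ← Set.ncard_image_of_injective _ extVec_injective, ← Set.ncard_coe_finset]
  congr 1
  ext u
  simp only [Set.mem_image, Set.mem_ofPred_eq, coe_filter, mem_zeroNeighbors]
  constructor
  · rintro ⟨v, ⟨hzn, rfl⟩, rfl⟩
    exact ⟨⟨(isZeroNeighbor_image_extVec_iff hw).2 hzn, wt_extVec_of_odd hw⟩,
      (extVec_last_ne_zero_iff v).2 hw⟩
  · rintro ⟨⟨hzn, hwt⟩, hlast⟩
    obtain ⟨v, -, rfl⟩ := hzn.1
    have hodd := (extVec_last_ne_zero_iff v).1 hlast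
    refine ⟨v, ⟨(isZeroNeighbor_image_extVec_iff hodd).1 hzn, ?_⟩, rfl⟩
    rw [wt_extVec_of_odd hodd] at hwt
    omega

end ZeroNeighbors

theorem lwd_odd_from_extended {n : ℕ}
    (C : Submodule (ZMod 2) (Fin n → ZMod 2))
    (htrans : ∀ i j : Fin (n + 1), ∃ π : Equiv.Perm (Fin (n + 1)),
      IsAut (extCode C) π ∧ π i = j)
    (w : ℕ) (hw : Odd w) :
    (Lw (C : Set (Fin n → ZMod 2)) w : ℚ) =
      (((w : ℚ) + 1) / (n + 1)) * Lw (extCode C) (w + 1) := by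
  have hcount : (n + 1) * Lw (C : Set (Fin n → ZMod 2)) w = (w + 1) * Lw (extCode C) (w + 1) := by
    rw [Lw_eq_card_zeroNeighbors_image_extVec hw]
    exact mul_card_zeroNeighbors_filter_apply_ne_zero htrans (w + 1) (Fin.last n)
  field_simp
  rw [mul_comm]
  exact_mod_cast hcount
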